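/- The action ◇ of the grafting pre-Lie algebra T on the doubling space V is a derivation with respect to the doubling pre-Lie product ⤳: for all t1 ∈ T and (t2,s2), (t3,s3) ∈ V, t1 ◇ ((t2,s2) ⤳ (t3,s3)) = (t1 ◇ (t2,s2)) ⤳ (t3,s3) + (t2,s2) ⤳ (t1 ◇ (t3,s3)). -/

import Mathlib

open scoped TensorProduct

/-- Planar rooted trees: a tree is a root together with a list of subtrees. -/
inductive RTree : Type where
  | node : List RTree → RTree

instance : Inhabited RTree := ⟨.node []⟩

namespace RTree

-- An injective code of a planar rooted tree.
mutual
  def code : RTree → List ℕ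
    | .node ts => ts.length :: codeL ts
  def codeL : List RTree → List ℕ
    | [] => []
    | t :: ts => code t ++ codeL ts
end

/-- Lexicographic comparison of codes. -/
def lleb : List ℕ → List ℕ → Bool
  | [], _ => true
  | _ :: _, [] => false
  | a :: as, b :: bs => decide (a < b) || (decide (a = b) && lleb as bs)

-- Normal form of a rooted tree: recursively sort the lists of subtrees.
-- Two planar trees represent the same abstract rooted tree iff they have the
-- same normal form.
mutual
  def norm : RTree → RTree
    | .node ts => .node ((normL ts).mergeSort fun a b => lleb (code a) (code b))
  def normL : List RTree → List RTree
    | [] => []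
    | t :: ts => norm t :: normL ts
end

-- Number of vertices.
mutual
  def size : RTree → ℕ
    | .node ts => 1 + sizeL ts
  def sizeL : List RTree → ℕ
    | [] => 0
    | t :: ts => size t + sizeL ts
end

-- Vertices of a tree, as positions (paths of child indices from the root).
mutual
  def vertices : RTree → List (List ℕ)
    | .node ts => [] :: verticesL 0 ts
  def verticesL : ℕ → List RTree → List (List ℕ)
    | _, [] => []
    | i, t :: ts => (vertices t).map (i :: ·) ++ verticesL (i + 1) ts
end

/-- `graftAt t p s` grafts the root of `t` on the vertex at position `p` of `s`
(the new subtree is appended at the end, so positions of `s` are unchanged). -/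
def graftAt (t : RTree) : List ℕ → RTree → RTree
  | [], .node ts => .node (ts ++ [t])
  | i :: q, .node ts =>
      .node (ts.set i (graftAt t q (ts.getD i (.node []))))

end RTree

/-- Abstract rooted trees: planar trees up to sibling permutation. -/
instance treeSetoid : Setoid RTree :=
  ⟨fun a b => a.norm = b.norm, ⟨fun _ => rfl, Eq.symm, Eq.trans⟩⟩

abbrev TreeQ := Quotient treeSetoid

def tq (t : RTree) : TreeQ := Quotient.mk treeSetoid t

/-- A forest, as a multiset of abstract rooted trees. -/
def forestQ (l : List RTree) : Multiset TreeQ := (l.map tq : List TreeQ)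

/-- The vector space `T` spanned by rooted trees. -/
abbrev TM := TreeQ →₀ ℚ

noncomputable def δT (t : RTree) : TM := Finsupp.single (tq t) 1

/-- `t → s`: the sum of all graftings of `t` on the vertices of `s`. -/
noncomputable def graftSum (t s : RTree) : TM :=
  ((RTree.vertices s).map fun p => δT (RTree.graftAt t p s)).sum

/-- The bilinear extension of the grafting product to `T`. -/
noncomputable def pre (a b : TM) : TM :=
  a.sum fun q c => b.sum fun r d => (c * d) • graftSum q.out r.out
/-- Rooted trees with a set of marked ("cut") edges: each child edge carries a
Boolean which is `true` iff the edge belongs to the cut. -/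
inductive CTree : Type where
  | node : List (Bool × CTree) → CTree

instance : Inhabited CTree := ⟨.node []⟩

namespace CTree

-- The underlying tree `t`.
mutual
  def forget : CTree → RTree
    | .node ts => .node (forgetL ts)
  def forgetL : List (Bool × CTree) → List RTree
    | [] => []
    | (_, c) :: ts => forget c :: forgetL ts
end

-- A tree with no marked edge at all.
mutual
  def noMarks : CTree → Bool
    | .node ts => noMarksL ts
  def noMarksL : List (Bool × CTree) → Bool
    | [] => true
    | (b, c) :: ts => !b && noMarks c && noMarksL ts
end

-- Admissibility of the cut: no marked edge above another marked edge,
-- i.e. every path from the root to a leaf contains at most one cut edge.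
mutual
  def adm : CTree → Bool
    | .node ts => admL ts
  def admL : List (Bool × CTree) → Bool
    | [] => true
    | (b, c) :: ts => (if b then noMarks c else adm c) && admL ts
end

-- The pruning `P^c(t)`: the subforest above the cut.
mutual
  def pruneF : CTree → List RTree
    | .node ts => pruneFL ts
  def pruneFL : List (Bool × CTree) → List RTree
    | [] => []
    | (b, c) :: ts => (if b then [forget c] else pruneF c) ++ pruneFL ts
end

-- The trunk `R^c(t)`: the subtree below the cut (containing the root).
mutual
  def trunk : CTree → RTree
    | .node ts => .node (trunkL ts)
  def trunkL : List (Bool × CTree) → List RTree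
    | [] => []
    | (b, c) :: ts => (if b then [] else [trunk c]) ++ trunkL ts
end

-- All vertex positions of the underlying tree.
mutual
  def allPos : CTree → List (List ℕ)
    | .node ts => [] :: allPosL 0 ts
  def allPosL : ℕ → List (Bool × CTree) → List (List ℕ)
    | _, [] => []
    | i, (_, c) :: ts => (allPos c).map (i :: ·) ++ allPosL (i + 1) ts
end

-- Positions of the vertices lying strictly above the cut (vertices of the pruning).
mutual
  def prunePos : CTree → List (List ℕ)
    | .node ts => prunePosL 0 ts
  def prunePosL : ℕ → List (Bool × CTree) → List (List ℕ)
    | _, [] => []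
    | i, (b, c) :: ts =>
        (if b then (allPos c).map (i :: ·) else (prunePos c).map (i :: ·)) ++
          prunePosL (i + 1) ts
end

-- Positions of the vertices of the trunk (not above the cut).
mutual
  def trunkPos : CTree → List (List ℕ)
    | .node ts => [] :: trunkPosL 0 ts
  def trunkPosL : ℕ → List (Bool × CTree) → List (List ℕ)
    | _, [] => []
    | i, (b, c) :: ts =>
        (if b then [] else (trunkPos c).map (i :: ·)) ++ trunkPosL (i + 1) ts
end

-- A plain tree viewed as a cut tree with no marks.
mutual
  def ofTree : RTree → CTree
    | .node ts => .node (ofTreeL ts)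
  def ofTreeL : List RTree → List (Bool × CTree)
    | [] => []
    | t :: ts => (false, ofTree t) :: ofTreeL ts
end

/-- `cgraft x p c` grafts the cut tree `x` (root edge unmarked) at the vertex
at position `p` of `c` (appended last, so positions of `c` are unchanged). -/
def cgraft (x : CTree) : List ℕ → CTree → CTree
  | [], .node ts => .node (ts ++ [(false, x)])
  | i :: q, .node ts =>
      .node (ts.set i
        ((ts.getD i (false, .node [])).1,
          cgraft x q (ts.getD i (false, .node [])).2))

-- injective code and normal form, as for plain trees
mutual
  def code : CTree → List ℕ
    | .node ts => ts.length :: codeL ts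
  def codeL : List (Bool × CTree) → List ℕ
    | [] => []
    | (b, c) :: ts => (if b then 1 else 0) :: (code c ++ codeL ts)
end

mutual
  def cnorm : CTree → CTree
    | .node ts =>
        .node ((cnormL ts).mergeSort fun a b =>
          RTree.lleb ((if a.1 then 1 else 0) :: code a.2) ((if b.1 then 1 else 0) :: code b.2))
  def cnormL : List (Bool × CTree) → List (Bool × CTree)
    | [] => []
    | (b, c) :: ts => (b, cnorm c) :: cnormL ts
end

end CTree

/-- Cut trees up to sibling permutation. -/
instance ctreeSetoid : Setoid CTree :=
  ⟨fun a b => a.cnorm = b.cnorm, ⟨fun _ => rfl, Eq.symm, Eq.trans⟩⟩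

abbrev CQ := Quotient ctreeSetoid

def cq (c : CTree) : CQ := Quotient.mk ctreeSetoid c
/-- The pair `(t, s)` (underlying tree, pruning) attached to a cut tree. -/
noncomputable def pairQ (c : CTree) : TreeQ × Multiset TreeQ :=
  (tq c.forget, forestQ c.pruneF)

/-- The module spanned by pairs (tree, forest); it contains the doubling
space `V` spanned by the pairs (tree, pruning of that tree). -/
abbrev MV := (TreeQ × Multiset TreeQ) →₀ ℚ

noncomputable def δV (c : CTree) : MV := Finsupp.single (pairQ c) 1

noncomputable def toMV (l : List CTree) : MV := (l.map δV).sum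

/-- `(t, s)` belongs to the doubling space `V`, i.e. `s` is the pruning of `t`
along some admissible cut. -/
def PairInV (p : TreeQ × Multiset TreeQ) : Prop :=
  ∃ c : CTree, c.adm = true ∧ pairQ c = p

/-- The doubling pre-Lie product `⤳` at the level of cut trees:
graft the first tree on each vertex of the second one which is not a
vertex of its pruning (i.e. on each trunk vertex). -/
def dmul (c₁ c₂ : CTree) : List CTree :=
  (CTree.trunkPos c₂).map fun p => CTree.cgraft c₁ p c₂

/-- The action `◇` of a tree on the doubling space: graft the tree on each
vertex of the pruning. -/
def dAct (t : RTree) (c : CTree) : List CTree :=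
  (CTree.prunePos c).map fun p => CTree.cgraft (CTree.ofTree t) p c

/-- `t → s` at list level: all graftings of `t` on vertices of `s`. -/
def rmulAll (t s : RTree) : List RTree :=
  (RTree.vertices s).map fun p => RTree.graftAt t p s

/-- All graftings of a tree on the vertices of a forest. -/
def fgraftAll (t : RTree) (f : List RTree) : List (List RTree) :=
  (List.range f.length).flatMap fun i =>
    (rmulAll t (f.getD i default)).map fun w => f.set i w

-- Admissible cuts of a tree/forest, with the associated (pruning, trunk).
mutual
  def treeCuts : RTree → List (List RTree × List RTree)
    | .node ts =>
        ([.node ts], []) ::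
          (forestCuts ts).map fun pr => (pr.1, [RTree.node pr.2])
  def forestCuts : List RTree → List (List RTree × List RTree)
    | [] => [([], [])]
    | t :: ts =>
        (treeCuts t).flatMap fun pr =>
          (forestCuts ts).map fun qr => (pr.1 ++ qr.1, pr.2 ++ qr.2)
end
-- The coproduct of the doubling bialgebra at the level of cut trees:
-- `delta c` enumerates the admissible cuts `c'` of the pruning `s` of `c`,
-- returning the pair of cut trees representing `(t, P^{c'}(s))` and
-- `(R^{c'}(t), R^{c'}(s))`.
mutual
  def cutsP : CTree → List (CTree × CTree)
    | .node ts => (cutsPL ts).map fun pr => (.node pr.1, .node pr.2)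
  def cutsPL : List (Bool × CTree) → List (List (Bool × CTree) × List (Bool × CTree))
    | [] => [([], [])]
    | (_, c) :: ts =>
        (cutsPL ts).flatMap fun pr =>
          ((true, c) :: pr.1, pr.2) ::
            (cutsP c).map fun qr => ((false, qr.1) :: pr.1, (false, qr.2) :: pr.2)
end

mutual
  def delta : CTree → List (CTree × CTree)
    | .node ts => (deltaL ts).map fun pr => (.node pr.1, .node pr.2)
  def deltaL : List (Bool × CTree) → List (List (Bool × CTree) × List (Bool × CTree))
    | [] => [([], [])]
    | (b, c) :: ts =>
        (deltaL ts).flatMap fun pr =>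
          if b then
            ((true, c) :: pr.1, pr.2) ::
              (cutsP c).map fun qr => ((false, qr.1) :: pr.1, (true, qr.2) :: pr.2)
          else
            (delta c).map fun qr => ((false, qr.1) :: pr.1, (false, qr.2) :: pr.2)
end

/-- The Connes–Kreimer Hopf algebra of rooted trees `H = S(T)`,
with basis the forests (multisets of rooted trees). -/
abbrev HCK := AddMonoidAlgebra ℚ (Multiset TreeQ)

noncomputable def singleH (f : Multiset TreeQ) : HCK := AddMonoidAlgebra.single f 1

noncomputable def oneH : HCK := AddMonoidAlgebra.single 0 1

noncomputable def δH (t : RTree) : HCK := singleH {tq t}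

/-- The doubling bialgebra `D = S(V)`, with basis the multisets of
(isomorphism classes of admissibly) cut trees. -/
abbrev DD := AddMonoidAlgebra ℚ (Multiset CQ)

noncomputable def singleD (m : Multiset CQ) : DD := AddMonoidAlgebra.single m 1

noncomputable def δD (c : CTree) : DD := singleD {cq c}

noncomputable def cfq (f : List CTree) : Multiset CQ := (f.map cq : List CQ)

/-- Admissible-cut coproduct on `H`, on a single tree. -/
noncomputable def ΔT (t : RTree) : HCK ⊗[ℚ] HCK :=
  ((treeCuts t).map fun pr => singleH (forestQ pr.1) ⊗ₜ[ℚ] singleH (forestQ pr.2)).sum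

/-- Admissible-cut coproduct on `H`, as a linear map (multiplicative on forests). -/
noncomputable def ΔH : HCK →ₗ[ℚ] HCK ⊗[ℚ] HCK :=
  (Finsupp.lsum ℚ fun (m : Multiset TreeQ) =>
    LinearMap.toSpanSingleton ℚ _ ((m.map fun q => ΔT q.out).prod)) ∘ₗ
      (AddMonoidAlgebra.coeffLinearEquiv ℚ).toLinearMap

/-- The coproduct of the doubling bialgebra on a single pair. -/
noncomputable def ΔVt (c : CTree) : DD ⊗[ℚ] DD :=
  ((delta c).map fun pr => δD pr.1 ⊗ₜ[ℚ] δD pr.2).sum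

/-- The coproduct of the doubling bialgebra, as a linear map `D → D ⊗ D`. -/
noncomputable def ΔD : DD →ₗ[ℚ] DD ⊗[ℚ] DD :=
  (Finsupp.lsum ℚ fun (m : Multiset CQ) =>
    LinearMap.toSpanSingleton ℚ _ ((m.map fun q => ΔVt q.out).prod)) ∘ₗ
      (AddMonoidAlgebra.coeffLinearEquiv ℚ).toLinearMap

/-- The counit of the doubling bialgebra: `ε (t, s) = ε (s)`. -/
noncomputable def εD : DD →ₗ[ℚ] ℚ :=
  (Finsupp.lsum ℚ fun (m : Multiset CQ) =>
    LinearMap.toSpanSingleton ℚ _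
      ((m.map fun q => if (Quotient.out q).pruneF.length = 0 then (1 : ℚ) else 0).prod)) ∘ₗ
      (AddMonoidAlgebra.coeffLinearEquiv ℚ).toLinearMap

/-- The unshuffling coproduct `Γ` of `H' = S(T)`. -/
noncomputable def ΓH : HCK →ₗ[ℚ] HCK ⊗[ℚ] HCK :=
  (Finsupp.lsum ℚ fun m =>
    LinearMap.toSpanSingleton ℚ _
      (((Multiset.antidiagonal m).map fun pq => singleH pq.1 ⊗ₜ[ℚ] singleH pq.2).sum)) ∘ₗ
      (AddMonoidAlgebra.coeffLinearEquiv ℚ).toLinearMap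

/-- The unshuffling coproduct `χ` of `D' = S(V)`. -/
noncomputable def χD : DD →ₗ[ℚ] DD ⊗[ℚ] DD :=
  (Finsupp.lsum ℚ fun m =>
    LinearMap.toSpanSingleton ℚ _
      (((Multiset.antidiagonal m).map fun pq => singleD pq.1 ⊗ₜ[ℚ] singleD pq.2).sum)) ∘ₗ
      (AddMonoidAlgebra.coeffLinearEquiv ℚ).toLinearMap

/-- The second projection `P₂ (t, s) = s`, as a linear map `D → H`. -/
noncomputable def P₂ : DD →ₗ[ℚ] HCK :=
  (Finsupp.lsum ℚ fun (m : Multiset CQ) =>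
    LinearMap.toSpanSingleton ℚ _ (singleH ((m.map fun q => forestQ (Quotient.out q).pruneF).sum))) ∘ₗ
      (AddMonoidAlgebra.coeffLinearEquiv ℚ).toLinearMap
/-- Representative forest (list of planar trees) of a multiset of tree classes. -/
noncomputable def repT (m : Multiset TreeQ) : List RTree := m.toList.map Quotient.out

/-- A single tree acting by grafting on `H` (extended Oudom–Guin `▷` of a tree
on products: graft on one factor of each forest). -/
noncomputable def rrtrT (t : RTree) (x : HCK) : HCK :=
  x.coeff.sum fun m r => r • ((fgraftAll t (repT m)).map fun f => singleH (forestQ f)).sum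

/-- The Oudom–Guin extension of the grafting pre-Lie product of rooted trees to
forests: `1 ▷ b = b`, `(x a) ▷ b = x ▷ (a ▷ b) - (x ▷ a) ▷ b`
(defined with a fuel argument equal to the length of the forest). -/
noncomputable def rrtrL : ℕ → List RTree → HCK → HCK
  | _, [], x => x
  | 0, _ :: _, _ => 0
  | n + 1, t :: a, x =>
      rrtrT t (rrtrL n a x) - ((fgraftAll t a).map fun b => rrtrL n b x).sum

noncomputable def rrtrF (a : List RTree) (x : HCK) : HCK := rrtrL a.length a x

/-- The Oudom–Guin product `⋆` on `H' = S(T)`: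
`a ⋆ b = Σ a⁽¹⁾ (a⁽²⁾ ▷ b)`. -/
noncomputable def starH (x y : HCK) : HCK :=
  x.coeff.sum fun m r =>
    r • ((Multiset.antidiagonal m).map fun pq => singleH pq.1 * rrtrF (repT pq.2) y).sum

/-- The module of pairs of forests (first component ⊗ pruning component),
receiving both `D'` and the image of the map `α`. -/
abbrev WD := (Multiset TreeQ × Multiset TreeQ) →₀ ℚ

/-- `α ((f, s) ⊗ y) = (f ⋆ y, s)`. -/
noncomputable def alphaW (x : WD) (y : HCK) : WD :=
  x.sum fun p c =>
    c • Finsupp.mapDomain (fun g => (g, p.2)) (starH (singleH p.1) y).coeff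

/-- Representative list of cut trees of a multiset of cut-tree classes. -/
noncomputable def repC (m : Multiset CQ) : List CTree := m.toList.map Quotient.out

/-- Graftings of a cut tree on one factor of a forest of cut trees, where the
admitted grafting positions on each factor are prescribed by `g`. -/
def fgraftC (g : CTree → CTree → List CTree) (c : CTree) (f : List CTree) :
    List (List CTree) :=
  (List.range f.length).flatMap fun i =>
    (g c (f.getD i default)).map fun w => f.set i w

/-- all-vertex graftings of a cut tree on a cut tree (used for the `H'`-product
acting on the first components). -/
def dmulAll (c₁ c₂ : CTree) : List CTree :=
  (CTree.allPos c₂).map fun p => CTree.cgraft c₁ p c₂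

noncomputable def singleDF (f : List CTree) : DD := singleD (cfq f)

/-- A single cut tree acting on `D` by `g`-grafting on one factor. -/
noncomputable def crtrT (g : CTree → CTree → List CTree) (c : CTree) (x : DD) : DD :=
  x.coeff.sum fun m r => r • ((fgraftC g c (repC m)).map singleDF).sum

/-- Oudom–Guin extension of the `g`-grafting pre-Lie product to forests of cut
trees (fuel version). -/
noncomputable def crtrL (g : CTree → CTree → List CTree) : ℕ → List CTree → DD → DD
  | _, [], x => x
  | 0, _ :: _, _ => 0
  | n + 1, c :: a, x =>
      crtrT g c (crtrL g n a x) - ((fgraftC g c a).map fun b => crtrL g n b x).sum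

noncomputable def crtrF (g : CTree → CTree → List CTree) (a : List CTree) (x : DD) : DD :=
  crtrL g a.length a x

/-- Oudom–Guin product on `S` of cut trees associated with the grafting rule `g`. -/
noncomputable def starC (g : CTree → CTree → List CTree) (x y : DD) : DD :=
  x.coeff.sum fun m r =>
    r • ((Multiset.antidiagonal m).map fun pq => singleD pq.1 * crtrF g (repC pq.2) y).sum

/-- The Oudom–Guin product `★` of the doubling pre-Lie algebra `(V, ⤳)`. -/
noncomputable def starD : DD → DD → DD := starC dmul

/-- The Oudom–Guin product `⋆` of `(T, →)` acting on decorated elements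
(grafting on all vertices). -/
noncomputable def starDAll : DD → DD → DD := starC dmulAll

/-- `H'` embedded in the decorated algebra (forests with no cut edge). -/
noncomputable def embedH (x : HCK) : DD :=
  x.coeff.sum fun m r => AddMonoidAlgebra.single (m.map fun q => cq (CTree.ofTree (Quotient.out q))) r

/-- The action `α (x ⊗ y) = (t ⋆ y, s)` computed on decorated elements. -/
noncomputable def alphaD (x : DD) (y : HCK) : DD := starDAll x (embedH y)

/-- Projection of a decorated element onto the pair
`(underlying forest, total pruning)`. -/
noncomputable def πD : DD →ₗ[ℚ] WD :=
  (Finsupp.lsum ℚ fun (m : Multiset CQ) =>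
    LinearMap.toSpanSingleton ℚ _
      (Finsupp.single
        (m.map fun q => tq (Quotient.out q).forget,
          (m.map fun q => forestQ (Quotient.out q).pruneF).sum) (1 : ℚ))) ∘ₗ
      (AddMonoidAlgebra.coeffLinearEquiv ℚ).toLinearMap


section DerivationAux

open List

private def dft : Bool × CTree := (false, .node [])

private theorem getD_set_self {α} (l : List α) (j : ℕ) (y d : α) (h : j < l.length) :
    (l.set j y).getD j d = y := by
  simp [List.getD_eq_getElem?_getD, List.getElem?_set_self h]

private theorem getD_set_ne {α} (l : List α) {j k : ℕ} (y d : α) (h : j ≠ k) :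
    (l.set j y).getD k d = l.getD k d := by
  simp [List.getD_eq_getElem?_getD, List.getElem?_set_ne h]

private theorem getD_concat {α} (l : List α) (x d : α) :
    (l ++ [x]).getD l.length d = x := by
  simp [List.getD_eq_getElem?_getD, List.getElem?_append_right (le_refl l.length)]

private theorem set_concat {α} (l : List α) (x y : α) :
    (l ++ [x]).set l.length y = l ++ [y] := by
  rw [List.set_append_right _ _ (le_refl l.length)]
  simp

private def chunkL (g : Bool → CTree → List (List ℕ)) : ℕ → List (Bool × CTree) → List (List ℕ)
  | _, [] => []
  | i, (b, c) :: ts => (g b c).map (i :: ·) ++ chunkL g (i+1) ts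

private def gP (b : Bool) (c : CTree) : List (List ℕ) :=
  if b then c.allPos else c.prunePos

private def gT (b : Bool) (c : CTree) : List (List ℕ) :=
  if b then [] else c.trunkPos

private def gA (_ : Bool) (c : CTree) : List (List ℕ) := c.allPos

private theorem prunePosL_eq : ∀ (ts : List (Bool × CTree)) (i : ℕ),
    CTree.prunePosL i ts = chunkL gP i ts
  | [], _ => rfl
  | (b, c) :: ts, i => by
    rw [CTree.prunePosL, chunkL, prunePosL_eq ts (i+1)]
    cases b <;> simp [gP]

private theorem trunkPosL_eq : ∀ (ts : List (Bool × CTree)) (i : ℕ),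
    CTree.trunkPosL i ts = chunkL gT i ts
  | [], _ => rfl
  | (b, c) :: ts, i => by
    rw [CTree.trunkPosL, chunkL, trunkPosL_eq ts (i+1)]
    cases b <;> simp [gT]

private theorem allPosL_eq : ∀ (ts : List (Bool × CTree)) (i : ℕ),
    CTree.allPosL i ts = chunkL gA i ts
  | [], _ => rfl
  | (_, c) :: ts, i => by
    rw [CTree.allPosL, chunkL, allPosL_eq ts (i+1), gA]

private theorem prunePos_node (ts : List (Bool × CTree)) :
    CTree.prunePos (.node ts) = chunkL gP 0 ts := by
  rw [CTree.prunePos, prunePosL_eq]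

private theorem trunkPos_node (ts : List (Bool × CTree)) :
    CTree.trunkPos (.node ts) = [] :: chunkL gT 0 ts := by
  rw [CTree.trunkPos, trunkPosL_eq]

private theorem allPos_node (ts : List (Bool × CTree)) :
    CTree.allPos (.node ts) = [] :: chunkL gA 0 ts := by
  rw [CTree.allPos, allPosL_eq]

private theorem mem_chunkL (g : Bool → CTree → List (List ℕ)) :
    ∀ (ts : List (Bool × CTree)) (i : ℕ) (q : List ℕ),
    q ∈ chunkL g i ts ↔ ∃ j r, j < ts.length ∧ q = (i + j) :: r ∧
      r ∈ g (ts.getD j dft).1 (ts.getD j dft).2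
  | [], i, q => by simp [chunkL]
  | (b, c) :: ts, i, q => by
    rw [chunkL, List.mem_append]
    constructor
    · rintro (h | h)
      · rcases List.mem_map.1 h with ⟨r, hr, rfl⟩
        exact ⟨0, r, by simp, by simp, by simpa [dft] using hr⟩
      · rcases (mem_chunkL g ts (i+1) q).1 h with ⟨j, r, hj, hq, hr⟩
        refine ⟨j + 1, r, by simpa using Nat.succ_lt_succ hj, ?_, by simpa [dft] using hr⟩
        rw [hq]; congr 1; omega
    · rintro ⟨j, r, hj, rfl, hr⟩
      cases j with
      | zero => exact Or.inl (List.mem_map.2 ⟨r, by simpa [dft] using hr, by simp⟩)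
      | succ j =>
        refine Or.inr ((mem_chunkL g ts (i+1) _).2
          ⟨j, r, by simpa using hj, ?_, by simpa [dft] using hr⟩)
        congr 1; omega

private theorem mem_chunk_cons {g : Bool → CTree → List (List ℕ)} {i : ℕ} {p : List ℕ}
    {ts : List (Bool × CTree)} :
    (i :: p) ∈ chunkL g 0 ts ↔ i < ts.length ∧ p ∈ g (ts.getD i dft).1 (ts.getD i dft).2 := by
  rw [mem_chunkL]
  constructor
  · rintro ⟨j, r, hj, hq, hr⟩
    rw [Nat.zero_add] at hq
    injection hq with h1 h2
    subst h1; subst h2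
    exact ⟨hj, hr⟩
  · rintro ⟨hi, hp⟩
    exact ⟨i, p, hi, by simp, hp⟩

private theorem nil_not_mem_chunkL {g : Bool → CTree → List (List ℕ)} {i : ℕ}
    {ts : List (Bool × CTree)} : [] ∉ chunkL g i ts := by
  rw [mem_chunkL]
  rintro ⟨j, r, -, h, -⟩
  simp at h

private theorem chunkL_decomp (g : Bool → CTree → List (List ℕ)) :
    ∀ (ts : List (Bool × CTree)) (i j : ℕ), j < ts.length →
    ∃ A B, (∀ y : Bool × CTree,
        chunkL g i (ts.set j y) = A ++ (g y.1 y.2).map ((i + j) :: ·) ++ B) ∧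
      chunkL g i ts = A ++ (g (ts.getD j dft).1 (ts.getD j dft).2).map ((i + j) :: ·) ++ B
  | [], _, _, h => by simp at h
  | (b, c) :: ts, i, 0, _ =>
    ⟨[], chunkL g (i+1) ts, fun y => by simp [chunkL], by simp [chunkL, dft]⟩
  | (b, c) :: ts, i, j + 1, h => by
    obtain ⟨A, B, hset, horig⟩ := chunkL_decomp g ts (i+1) j (by simpa using h)
    have hidx : i + 1 + j = i + (j + 1) := by omega
    refine ⟨(g b c).map (i :: ·) ++ A, B, fun y => ?_, ?_⟩
    · rw [List.set_cons_succ, chunkL, hset y, hidx]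
      simp [List.append_assoc]
    · rw [chunkL, horig, hidx]
      simp [List.append_assoc, dft]

private theorem chunkL_concat (g : Bool → CTree → List (List ℕ)) :
    ∀ (ts : List (Bool × CTree)) (i : ℕ) (y : Bool × CTree),
    chunkL g i (ts ++ [y]) = chunkL g i ts ++ (g y.1 y.2).map ((i + ts.length) :: ·)
  | [], i, y => by simp [chunkL]
  | (b, c) :: ts, i, y => by
    rw [List.cons_append, chunkL, chunkL, chunkL_concat g ts (i+1) y]
    have h : i + 1 + ts.length = i + (ts.length + 1) := by omega
    simp [h, List.append_assoc]




private theorem gP_false (c : CTree) : gP false c = c.prunePos := rfl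
private theorem gP_true (c : CTree) : gP true c = c.allPos := rfl
private theorem gT_false (c : CTree) : gT false c = c.trunkPos := rfl
private theorem gT_true (c : CTree) : gT true c = [] := rfl
private theorem gA_def (b : Bool) (c : CTree) : gA b c = c.allPos := rfl

private theorem cgraft_nil (a : CTree) (ts : List (Bool × CTree)) :
    CTree.cgraft a [] (.node ts) = .node (ts ++ [(false, a)]) := rfl

private theorem cgraft_cons (a : CTree) (i : ℕ) (q : List ℕ) (ts : List (Bool × CTree)) :
    CTree.cgraft a (i :: q) (.node ts) =
      .node (ts.set i ((ts.getD i dft).1, CTree.cgraft a q (ts.getD i dft).2)) := rfl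

private theorem cgraft_cons_set (a : CTree) (i : ℕ) (p : List ℕ) (ts : List (Bool × CTree))
    (h : i < ts.length) (y : Bool × CTree) :
    CTree.cgraft a (i :: p) (.node (ts.set i y)) = .node (ts.set i (y.1, CTree.cgraft a p y.2)) := by
  rw [cgraft_cons, getD_set_self _ _ _ _ (by simpa using h), List.set_set]

private def arity : List ℕ → CTree → ℕ
  | [], .node ts => ts.length
  | i :: p, .node ts => arity p (ts.getD i dft).2

private theorem mem_trunk_cons {i : ℕ} {p : List ℕ} {ts : List (Bool × CTree)} :
    (i :: p) ∈ CTree.trunkPos (.node ts) ↔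
      i < ts.length ∧ (ts.getD i dft).1 = false ∧ p ∈ (ts.getD i dft).2.trunkPos := by
  rw [trunkPos_node]
  simp only [List.mem_cons, reduceCtorEq, false_or]
  rw [mem_chunk_cons]
  cases hb : (ts.getD i dft).1 <;> simp [hb, gT]

private theorem mem_prune_cons {i : ℕ} {p : List ℕ} {ts : List (Bool × CTree)} :
    (i :: p) ∈ CTree.prunePos (.node ts) ↔
      i < ts.length ∧ p ∈ gP (ts.getD i dft).1 (ts.getD i dft).2 := by
  rw [prunePos_node, mem_chunk_cons]

private theorem mem_all_cons {i : ℕ} {p : List ℕ} {ts : List (Bool × CTree)} :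
    (i :: p) ∈ CTree.allPos (.node ts) ↔
      i < ts.length ∧ p ∈ (ts.getD i dft).2.allPos := by
  rw [allPos_node]
  simp only [List.mem_cons, reduceCtorEq, false_or]
  rw [mem_chunk_cons, gA_def]

private theorem nil_not_mem_prune (c : CTree) : [] ∉ c.prunePos := by
  rcases c with ⟨ts⟩
  rw [prunePos_node]
  exact nil_not_mem_chunkL

private theorem nil_mem_all (c : CTree) : [] ∈ c.allPos := by
  rcases c with ⟨ts⟩
  rw [allPos_node]
  simp

private theorem trunk_sub : ∀ (p : List ℕ) (c : CTree), p ∈ c.trunkPos → p ∈ c.allPos := by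
  intro p
  induction p with
  | nil => intro c _; exact nil_mem_all c
  | cons i p ih =>
    rintro ⟨ts⟩ h
    rw [mem_trunk_cons] at h
    exact mem_all_cons.2 ⟨h.1, ih _ h.2.2⟩

private theorem prune_sub : ∀ (p : List ℕ) (c : CTree), p ∈ c.prunePos → p ∈ c.allPos := by
  intro p
  induction p with
  | nil => intro c h; exact absurd h (nil_not_mem_prune c)
  | cons i p ih =>
    rintro ⟨ts⟩ h
    rw [mem_prune_cons] at h
    obtain ⟨hi, hp⟩ := h
    refine mem_all_cons.2 ⟨hi, ?_⟩
    cases hb : (ts.getD i dft).1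
    · rw [hb, gP_false] at hp; exact ih _ hp
    · rw [hb, gP_true] at hp; exact hp

private theorem trunk_prune_disj : ∀ (p : List ℕ) (c : CTree),
    p ∈ c.trunkPos → p ∈ c.prunePos → False := by
  intro p
  induction p with
  | nil => intro c _ h; exact nil_not_mem_prune c h
  | cons i p ih =>
    rintro ⟨ts⟩ h1 h2
    rw [mem_trunk_cons] at h1
    rw [mem_prune_cons] at h2
    have hp := h2.2
    rw [h1.2.1, gP_false] at hp
    exact ih _ h1.2.2 hp

private theorem cgraft_root_comm (a b : CTree) (j : ℕ) (q : List ℕ)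
    (ts : List (Bool × CTree)) (hj : j < ts.length) :
    CTree.cgraft a [] (CTree.cgraft b (j :: q) (.node ts)) =
      CTree.cgraft b (j :: q) (CTree.cgraft a [] (.node ts)) := by
  rw [cgraft_cons, cgraft_nil, cgraft_nil, cgraft_cons,
    List.getD_append _ _ _ _ hj, List.set_append_left _ _ hj]

private theorem cgraft_comm (a b : CTree) : ∀ (p q : List ℕ) (c : CTree),
    p ∈ c.allPos → q ∈ c.allPos → p ≠ q →
    CTree.cgraft a p (CTree.cgraft b q c) = CTree.cgraft b q (CTree.cgraft a p c) := by
  intro p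
  induction p with
  | nil =>
    rintro q ⟨ts⟩ _ hq hne
    cases q with
    | nil => exact absurd rfl hne
    | cons j q' => exact cgraft_root_comm a b j q' ts (mem_all_cons.1 hq).1
  | cons i p' ih =>
    rintro q ⟨ts⟩ hp hq hne
    cases q with
    | nil => exact (cgraft_root_comm b a i p' ts (mem_all_cons.1 hp).1).symm
    | cons j q' =>
      rw [mem_all_cons] at hp hq
      by_cases hij : i = j
      · subst hij
        have hpq : p' ≠ q' := fun h => hne (by rw [h])
        rw [cgraft_cons b i q' ts, cgraft_cons_set a i p' ts hp.1,
          cgraft_cons a i p' ts, cgraft_cons_set b i q' ts hq.1]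
        dsimp only
        rw [ih q' _ hp.2 hq.2 hpq]
      · rw [cgraft_cons b j q' ts, cgraft_cons a i p' (ts.set j _),
          cgraft_cons a i p' ts, cgraft_cons b j q' (ts.set i _),
          getD_set_ne _ _ _ (fun h => hij h.symm), getD_set_ne _ _ _ hij,
          List.set_comm _ _ (fun h => hij h.symm)]

private theorem cgraft_nested (a x : CTree) : ∀ (p q : List ℕ) (c : CTree), p ∈ c.allPos →
    CTree.cgraft a (p ++ arity p c :: q) (CTree.cgraft x p c) =
      CTree.cgraft (CTree.cgraft a q x) p c := by
  intro p
  induction p with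
  | nil =>
    rintro q ⟨ts⟩ _
    show CTree.cgraft a (ts.length :: q) (.node (ts ++ [(false, x)])) = _
    rw [cgraft_cons a ts.length q, getD_concat]
    dsimp only
    rw [set_concat, cgraft_nil]
  | cons i p' ih =>
    rintro q ⟨ts⟩ hp
    rw [mem_all_cons] at hp
    show CTree.cgraft a (i :: (p' ++ arity p' (ts.getD i dft).2 :: q))
        (CTree.cgraft x (i :: p') (.node ts)) = _
    rw [cgraft_cons x i p' ts, cgraft_cons_set a i _ ts hp.1]
    dsimp only
    rw [ih q _ hp.2, cgraft_cons (CTree.cgraft a q x) i p' ts]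

private theorem trunkPos_cgraft_prune (x : CTree) : ∀ (p : List ℕ) (c : CTree),
    p ∈ c.prunePos → (CTree.cgraft x p c).trunkPos = c.trunkPos := by
  intro p
  induction p with
  | nil => intro c h; exact absurd h (nil_not_mem_prune c)
  | cons i p' ih =>
    rintro ⟨ts⟩ h
    rw [mem_prune_cons] at h
    obtain ⟨hi, hp⟩ := h
    obtain ⟨A, B, hset, horig⟩ := chunkL_decomp gT ts 0 i hi
    rw [cgraft_cons x i p' ts, trunkPos_node, trunkPos_node, hset, horig]
    dsimp only
    cases hb : (ts.getD i dft).1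
    · rw [hb, gP_false] at hp
      rw [gT_false, gT_false, ih _ hp]
    · rw [gT_true, gT_true]

private theorem perm_shuffle {α} (A M N B : List α) : (A ++ (M ++ N) ++ B).Perm ((A ++ M ++ B) ++ N) := by
  have h1 : A ++ (M ++ N) ++ B = A ++ (M ++ (N ++ B)) := by simp [List.append_assoc]
  have h2 : A ++ M ++ B ++ N = A ++ (M ++ (B ++ N)) := by simp [List.append_assoc]
  rw [h1, h2]
  exact ((List.perm_append_comm).append_left M).append_left A

private theorem perm_middle_congr {α} {A B M N P : List α} (h : M.Perm (N ++ P)) :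
    (A ++ M ++ B).Perm ((A ++ N ++ B) ++ P) :=
  (((h.append_left A).append_right B)).trans (perm_shuffle A N P B)

private theorem prunePos_cgraft_trunk (x : CTree) : ∀ (p : List ℕ) (c : CTree),
    p ∈ c.trunkPos →
    (CTree.cgraft x p c).prunePos.Perm
      (c.prunePos ++ x.prunePos.map (fun r => p ++ arity p c :: r)) := by
  intro p
  induction p with
  | nil =>
    rintro ⟨ts⟩ _
    rw [cgraft_nil, prunePos_node, prunePos_node, chunkL_concat]
    simp only [gP_false, Nat.zero_add, List.nil_append]
    exact List.Perm.refl _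
  | cons i p' ih =>
    rintro ⟨ts⟩ h
    rw [mem_trunk_cons] at h
    obtain ⟨hi, hb, hp'⟩ := h
    obtain ⟨A, B, hset, horig⟩ := chunkL_decomp gP ts 0 i hi
    rw [cgraft_cons x i p' ts, prunePos_node, prunePos_node, hset, horig]
    dsimp only
    rw [hb, gP_false, gP_false]
    simp only [Nat.zero_add]
    have hperm := (ih _ hp').map (i :: ·)
    rw [List.map_append, List.map_map] at hperm
    exact perm_middle_congr hperm




private theorem toMV_append (l₁ l₂ : List CTree) : toMV (l₁ ++ l₂) = toMV l₁ + toMV l₂ := by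
  simp [toMV]

private theorem toMV_perm {l₁ l₂ : List CTree} (h : l₁.Perm l₂) : toMV l₁ = toMV l₂ :=
  List.Perm.sum_eq (h.map δV)

private theorem toMV_flatMap {α} (l : List α) (f : α → List CTree) :
    toMV (l.flatMap f) = (l.map fun a => toMV (f a)).sum := by
  induction l with
  | nil => simp [toMV]
  | cons a l ih => rw [List.flatMap_cons, toMV_append, ih, List.map_cons, List.sum_cons]

private theorem toMV_map {α} (l : List α) (F : α → CTree) :
    toMV (l.map F) = (l.map fun a => δV (F a)).sum := by
  simp [toMV, List.map_map, Function.comp_def]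

private theorem sum_map_zero {β M : Type*} [AddCommMonoid M] (l : List β) :
    (l.map fun _ => (0 : M)).sum = 0 := by
  induction l <;> simp [*]

private theorem sum_swap {α β M : Type*} [AddCommMonoid M] (l₁ : List α) (l₂ : List β)
    (F : α → β → M) :
    (l₁.map fun a => (l₂.map fun b => F a b).sum).sum
      = (l₂.map fun b => (l₁.map fun a => F a b).sum).sum := by
  induction l₁ with
  | nil =>
    simp only [List.map_nil, List.sum_nil]
    exact (sum_map_zero l₂).symm
  | cons a l₁ ih =>
    simp only [List.map_cons, List.sum_cons, ih]
    rw [← List.sum_map_add]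

end DerivationAux
theorem dAct_is_derivation (t₁ : RTree) (c₂ c₃ : CTree)
    (h₂ : c₂.adm = true) (h₃ : c₃.adm = true) :
    toMV ((dmul c₂ c₃).flatMap fun w => dAct t₁ w) =
      toMV ((dAct t₁ c₂).flatMap fun w => dmul w c₃) +
        toMV ((dAct t₁ c₃).flatMap fun w => dmul c₂ w) := by
  simp only [dmul, dAct, toMV_flatMap, List.map_map, Function.comp_def]
  have key : ∀ p ∈ CTree.trunkPos c₃,
      toMV ((CTree.cgraft c₂ p c₃).prunePos.map fun q =>
          CTree.cgraft (CTree.ofTree t₁) q (CTree.cgraft c₂ p c₃))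
        = ((c₃.prunePos.map fun q => δV (CTree.cgraft c₂ p (CTree.cgraft (CTree.ofTree t₁) q c₃))).sum
            + (c₂.prunePos.map fun q => δV (CTree.cgraft (CTree.cgraft (CTree.ofTree t₁) q c₂) p c₃)).sum) := by
    intro p hp
    rw [toMV_perm ((prunePos_cgraft_trunk c₂ p c₃ hp).map fun q =>
      CTree.cgraft (CTree.ofTree t₁) q (CTree.cgraft c₂ p c₃))]
    rw [List.map_append, toMV_append, List.map_map]
    congr 1
    · rw [toMV_map]
      refine congrArg List.sum (List.map_congr_left fun q hq => ?_)
      refine congrArg δV ?_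
      exact cgraft_comm (CTree.ofTree t₁) c₂ q p c₃ (prune_sub q c₃ hq) (trunk_sub p c₃ hp)
        (fun h => trunk_prune_disj p c₃ hp (h ▸ hq))
    · rw [toMV_map]
      refine congrArg List.sum (List.map_congr_left fun q hq => ?_)
      refine congrArg δV ?_
      exact cgraft_nested (CTree.ofTree t₁) c₂ p q c₃ (trunk_sub p c₃ hp)
  rw [List.map_congr_left key, List.sum_map_add]
  have key₃ : ∀ q ∈ CTree.prunePos c₃,
      toMV ((CTree.cgraft (CTree.ofTree t₁) q c₃).trunkPos.map fun p =>
          CTree.cgraft c₂ p (CTree.cgraft (CTree.ofTree t₁) q c₃))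
        = (c₃.trunkPos.map fun p => δV (CTree.cgraft c₂ p (CTree.cgraft (CTree.ofTree t₁) q c₃))).sum := by
    intro q hq
    rw [trunkPos_cgraft_prune (CTree.ofTree t₁) q c₃ hq, toMV_map]
  rw [List.map_congr_left key₃]
  have key₂ : ∀ q ∈ CTree.prunePos c₂,
      toMV (c₃.trunkPos.map fun p => CTree.cgraft (CTree.cgraft (CTree.ofTree t₁) q c₂) p c₃)
        = (c₃.trunkPos.map fun p => δV (CTree.cgraft (CTree.cgraft (CTree.ofTree t₁) q c₂) p c₃)).sum := by
    intro q _
    rw [toMV_map]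
  rw [List.map_congr_left key₂]
  rw [add_comm]
  congr 1
  · exact sum_swap c₃.trunkPos c₂.prunePos _
  · exact sum_swap c₃.trunkPos c₃.prunePos _
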